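/- arXiv:2010.00156 — 4 statements merged into one kernel-verified Lean document; each statement's English description precedes it below -/
import Mathlib

section
/- (Rodrigues' rotation formula) For every nonzero x ∈ ℝ³ with θ = ‖x‖₂, the matrix exponential satisfies exp(x^∧) = I + sin(θ)·(x/θ)^∧ + (1 − cos(θ))·((x/θ)^∧)². -/
/-!
Write `x = θ • u` with `‖u‖ = 1`. Then `K = u^∧` satisfies `K ^ 3 = -K` (the characteristic
polynomial of `x^∧` is `λ³ + ‖x‖² λ`), so the powers of `K` alternate in sign between `K` and
`K ^ 2`, and the exponential series of `θ • K` splits into the sine series times `K` and the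
cosine series without its constant term times `-K ^ 2`.
-/

open Matrix Nat

/-- The hat map sending `x ∈ ℝ³` to the skew-symmetric matrix `x^∧`. -/
def hat (x : EuclideanSpace ℝ (Fin 3)) : Matrix (Fin 3) (Fin 3) ℝ :=
  !![0, -x 2, x 1; x 2, 0, -x 0; -x 1, x 0, 0]

section PowThreeEqNeg

variable {A : Type*} [Ring A] [Algebra ℝ A] {K : A}

theorem pow_two_mul_add_one_of_pow_three_eq_neg (hK : K ^ 3 = -K) (k : ℕ) :
    K ^ (2 * k + 1) = (-1 : ℝ) ^ k • K := by
  induction k with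
  | zero => simp
  | succ k ih =>
    rw [show 2 * (k + 1) + 1 = 2 + (2 * k + 1) by ring, pow_add, ih, mul_smul_comm,
      ← pow_succ, hK, smul_neg, pow_succ, mul_neg_one, neg_smul]

theorem pow_two_mul_add_two_of_pow_three_eq_neg (hK : K ^ 3 = -K) (k : ℕ) :
    K ^ (2 * k + 2) = (-1 : ℝ) ^ k • K ^ 2 := by
  rw [pow_succ, pow_two_mul_add_one_of_pow_three_eq_neg hK, smul_mul_assoc, ← pow_two]

variable [TopologicalSpace A] [IsTopologicalRing A] [ContinuousSMul ℝ A] [T2Space A]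

theorem exp_smul_of_pow_three_eq_neg (hK : K ^ 3 = -K) (θ : ℝ) :
    NormedSpace.exp (θ • K) = 1 + Real.sin θ • K + (1 - Real.cos θ) • K ^ 2 := by
  rw [NormedSpace.exp_eq_tsum ℝ]
  refine HasSum.tsum_eq ?_
  simp only [smul_pow, smul_smul, ← div_eq_inv_mul]
  have hodd : HasSum (fun k ↦ (θ ^ (2 * k + 1) / (2 * k + 1)!) • K ^ (2 * k + 1))
      (Real.sin θ • K) := by
    convert (Real.hasSum_sin θ).smul_const K using 2 with k
    rw [pow_two_mul_add_one_of_pow_three_eq_neg hK, smul_smul, mul_div_assoc, mul_comm]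
  have heven_tail : HasSum (fun k ↦ (θ ^ (2 * (k + 1)) / (2 * (k + 1))!) • K ^ (2 * (k + 1)))
      ((1 - Real.cos θ) • K ^ 2) := by
    convert ((hasSum_nat_add_iff' 1).mpr (Real.hasSum_cos θ)).smul_const (-K ^ 2) using 1
    · funext k
      rw [_root_.mul_add_one, pow_two_mul_add_two_of_pow_three_eq_neg hK, smul_smul, smul_neg,
        ← neg_smul]
      congr 1
      ring
    · simp [← neg_smul]
  have heven : HasSum (fun k ↦ (θ ^ (2 * k) / (2 * k)!) • K ^ (2 * k))
      (1 + (1 - Real.cos θ) • K ^ 2) := by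
    refine (hasSum_nat_add_iff' 1).mp ?_
    simpa using heven_tail
  rw [add_right_comm]
  exact heven.even_add_odd hodd

end PowThreeEqNeg

theorem hat_smul (c : ℝ) (x : EuclideanSpace ℝ (Fin 3)) : hat (c • x) = c • hat x := by
  ext i j
  fin_cases i <;> fin_cases j <;> simp [hat]

theorem hat_pow_three (x : EuclideanSpace ℝ (Fin 3)) : hat x ^ 3 = -(‖x‖ ^ 2) • hat x := by
  rw [EuclideanSpace.real_norm_sq_eq, Fin.sum_univ_three, pow_succ, pow_two]
  ext i j
  fin_cases i <;> fin_cases j <;> simp [hat, Matrix.mul_apply, Fin.sum_univ_three] <;> ring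

/-- Rodrigues' rotation formula: for every nonzero `x ∈ ℝ³` with `θ = ‖x‖₂`,
`exp(x^∧) = I + sin(θ)·(x/θ)^∧ + (1 − cos(θ))·((x/θ)^∧)²`. -/
theorem rodrigues_formula (x : EuclideanSpace ℝ (Fin 3)) (hx : x ≠ 0) :
    NormedSpace.exp (hat x) =
      1 + Real.sin ‖x‖ • hat ((‖x‖)⁻¹ • x)
        + (1 - Real.cos ‖x‖) • hat ((‖x‖)⁻¹ • x) ^ 2 := by
  have hθ : ‖x‖ ≠ 0 := norm_ne_zero_iff.mpr hx
  have hunit : hat (‖x‖⁻¹ • x) ^ 3 = -hat (‖x‖⁻¹ • x) := by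
    rw [hat_pow_three, norm_smul, norm_inv, norm_norm, inv_mul_cancel₀ hθ, one_pow, neg_one_smul]
  have hx_eq : hat x = ‖x‖ • hat (‖x‖⁻¹ • x) := by
    rw [hat_smul, smul_smul, mul_inv_cancel₀ hθ, one_smul]
  rw [hx_eq, exp_smul_of_pow_three_eq_neg hunit]
end

section
/- For every R ∈ SO(3) with θ(R) ∈ (0, π), the exponential map inverts the logarithmic map: exp(Log(R)) = R. -/
open Matrix Real

/-- `SO(3)`: real 3×3 matrices `R` with `RᵀR = I` and `det R = 1`. -/
def SO3 (R : Matrix (Fin 3) (Fin 3) ℝ) : Prop :=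
  Rᵀ * R = 1 ∧ R.det = 1

/-- The rotation angle `θ(R) = arccos((tr(R) − 1)/2)`. -/
noncomputable def rotAngle (R : Matrix (Fin 3) (Fin 3) ℝ) : ℝ :=
  Real.arccos ((Matrix.trace R - 1) / 2)

/-- The matrix logarithm `Log(R) = (θ/(2 sin θ))(R − Rᵀ)` for `θ ≠ 0`, and `0` for `θ = 0`. -/
noncomputable def matLog (R : Matrix (Fin 3) (Fin 3) ℝ) : Matrix (Fin 3) (Fin 3) ℝ :=
  if rotAngle R = 0 then 0
  else (rotAngle R / (2 * Real.sin (rotAngle R))) • (R - Rᵀ)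

/-!
For a rotation `R` with trace `t`, Cayley–Hamilton and `Rᵀ = R⁻¹ = adj R` express `Rᵀ`,
hence `B = R - Rᵀ`, as a polynomial in `R`; reducing modulo `X³ - tX² + tX - 1` gives
`B³ = -(3 - t)(1 + t) B` and `B² = 2(1 + t)(R - 1) - (1 + t) B`.
As `4 sin² θ = (3 - t)(1 + t)`, `W = Log R = (θ / (2 sin θ)) B` satisfies `W³ = -θ² W`,
so the exponential series collapses to Rodrigues' formula
`exp W = 1 + (sin θ / θ) W + ((1 - cos θ) / θ²) W²`,
and the identity for `B²` turns the right-hand side into `R`.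
-/

open Polynomial
open scoped Nat

namespace Real

lemma hasSum_sin_div {θ : ℝ} (hθ : θ ≠ 0) :
    HasSum (fun k : ℕ => (-θ ^ 2) ^ k / (2 * k + 1)!) (sin θ / θ) := by
  have hterm : (fun k : ℕ => (-θ ^ 2) ^ k / (2 * k + 1)!) =
      fun k : ℕ => (-1) ^ k * θ ^ (2 * k + 1) / (2 * k + 1)! / θ := by
    ext k
    rw [neg_pow, ← pow_mul, pow_succ θ (2 * k)]
    field_simp
  rw [hterm]
  exact (hasSum_sin θ).div_const θ

lemma hasSum_one_sub_cos_div_sq {θ : ℝ} (hθ : θ ≠ 0) :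
    HasSum (fun k : ℕ => (-θ ^ 2) ^ k / (2 * k + 2)!) ((1 - cos θ) / θ ^ 2) := by
  have htail := (hasSum_nat_add_iff' 1).mpr (hasSum_cos θ)
  simp only [Finset.sum_range_one, pow_zero, mul_zero, Nat.factorial_zero, Nat.cast_one,
    div_one] at htail
  have hterm : (fun k : ℕ => (-θ ^ 2) ^ k / (2 * k + 2)!) =
      fun k : ℕ => -((-1) ^ (k + 1) * θ ^ (2 * (k + 1)) / (2 * (k + 1))!) / θ ^ 2 := by
    ext k
    rw [show 2 * (k + 1) = 2 * k + 2 by ring, neg_pow, pow_succ (-1 : ℝ), pow_add, pow_mul]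
    field_simp
  rw [hterm, show 1 - cos θ = -(cos θ - 1 * 1) by ring]
  exact htail.neg.div_const _

end Real

section

variable {S 𝔸 : Type*} [CommSemiring S] [Semiring 𝔸] [Algebra S 𝔸] {a : S} {W : 𝔸}

lemma pow_two_mul_add_one_of_pow_three_eq_smul (hW : W ^ 3 = a • W) (k : ℕ) :
    W ^ (2 * k + 1) = a ^ k • W := by
  induction k with
  | zero => simp
  | succ k ih =>
    rw [show 2 * (k + 1) + 1 = 2 * k + 1 + 2 by ring, pow_add, ih, smul_mul_assoc,
      ← pow_succ', hW, smul_smul, pow_succ]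

lemma pow_two_mul_add_two_of_pow_three_eq_smul (hW : W ^ 3 = a • W) (k : ℕ) :
    W ^ (2 * k + 2) = a ^ k • W ^ 2 := by
  rw [pow_succ, pow_two_mul_add_one_of_pow_three_eq_smul hW, smul_mul_assoc, ← pow_two]

end

theorem NormedSpace.exp_of_pow_three_eq_neg_sq_smul {𝔸 : Type*} [Ring 𝔸] [Algebra ℝ 𝔸]
    [TopologicalSpace 𝔸] [IsTopologicalRing 𝔸] [ContinuousSMul ℝ 𝔸] [T2Space 𝔸]
    {θ : ℝ} (hθ : θ ≠ 0) {W : 𝔸} (hW : W ^ 3 = (-θ ^ 2) • W) :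
    NormedSpace.exp W = 1 + (sin θ / θ) • W + ((1 - cos θ) / θ ^ 2) • W ^ 2 := by
  have hodd : HasSum (fun k : ℕ => ((2 * k + 1)! : ℝ)⁻¹ • W ^ (2 * k + 1))
      ((sin θ / θ) • W) := by
    convert (Real.hasSum_sin_div hθ).smul_const W using 2 with k
    rw [pow_two_mul_add_one_of_pow_three_eq_smul hW, smul_smul, inv_mul_eq_div]
  have heven : HasSum (fun k : ℕ => ((2 * k + 2)! : ℝ)⁻¹ • W ^ (2 * k + 2))
      (((1 - cos θ) / θ ^ 2) • W ^ 2) := by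
    convert (Real.hasSum_one_sub_cos_div_sq hθ).smul_const (W ^ 2) using 2 with k
    rw [pow_two_mul_add_two_of_pow_three_eq_smul hW, smul_smul, inv_mul_eq_div]
  have hexp : HasSum (fun n : ℕ => (n ! : ℝ)⁻¹ • W ^ n)
      (1 + ((sin θ / θ) • W + ((1 - cos θ) / θ ^ 2) • W ^ 2)) := by
    have hsucc : HasSum (fun n : ℕ => ((n + 1)! : ℝ)⁻¹ • W ^ (n + 1))
        ((sin θ / θ) • W + ((1 - cos θ) / θ ^ 2) • W ^ 2) :=
      hodd.even_add_odd heven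
    simpa using HasSum.zero_add (f := fun n : ℕ => (n ! : ℝ)⁻¹ • W ^ n) hsucc
  rw [NormedSpace.exp_eq_tsum ℝ, add_assoc]
  exact hexp.tsum_eq

theorem Matrix.cayley_hamilton_fin_three {K : Type*} [CommRing K]
    (M : Matrix (Fin 3) (Fin 3) K) :
    M ^ 3 - M.trace • M ^ 2 + M.adjugate.trace • M - M.det • 1 = 0 := by
  ext i j
  fin_cases i <;> fin_cases j <;>
    simp [pow_succ, Matrix.mul_apply, Fin.sum_univ_succ, Matrix.trace, Matrix.det_fin_three,
      Matrix.adjugate_fin_three] <;> ring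

namespace SO3

variable {R : Matrix (Fin 3) (Fin 3) ℝ}

lemma adjugate_eq_transpose (hR : SO3 R) : R.adjugate = Rᵀ := by
  rw [← Matrix.inv_eq_left_inv hR.1, Matrix.inv_def, hR.2, Ring.inverse_one, one_smul]

lemma aeval_cubic_eq_zero (hR : SO3 R) :
    aeval R (X ^ 3 - C R.trace * X ^ 2 + C R.trace * X - 1 : ℝ[X]) = 0 := by
  have hCH := R.cayley_hamilton_fin_three
  rw [adjugate_eq_transpose hR, Matrix.trace_transpose, hR.2, one_smul] at hCH
  simpa [Algebra.smul_def] using hCH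

lemma transpose_eq_aeval (hR : SO3 R) :
    Rᵀ = aeval R (X ^ 2 - C R.trace * X + C R.trace : ℝ[X]) := by
  set t := R.trace
  have hinv : R * aeval R (X ^ 2 - C t * X + C t : ℝ[X]) = 1 := by
    have hdiv : (X * (X ^ 2 - C t * X + C t) : ℝ[X]) =
        (X ^ 3 - C t * X ^ 2 + C t * X - 1) + 1 := by
      ring
    calc R * aeval R (X ^ 2 - C t * X + C t : ℝ[X])
        = aeval R (X * (X ^ 2 - C t * X + C t) : ℝ[X]) := by rw [map_mul, aeval_X]
      _ = 1 := by rw [hdiv, map_add, aeval_cubic_eq_zero hR, map_one, zero_add]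
  calc Rᵀ = Rᵀ * (R * aeval R (X ^ 2 - C t * X + C t : ℝ[X])) := by rw [hinv, mul_one]
    _ = aeval R (X ^ 2 - C t * X + C t : ℝ[X]) := by rw [← mul_assoc, hR.1, one_mul]

lemma sub_transpose_eq_aeval (hR : SO3 R) :
    R - Rᵀ = aeval R (X - (X ^ 2 - C R.trace * X + C R.trace) : ℝ[X]) := by
  rw [map_sub, aeval_X, transpose_eq_aeval hR]

lemma sub_transpose_pow_three (hR : SO3 R) :
    (R - Rᵀ) ^ 3 = (-((3 - R.trace) * (1 + R.trace))) • (R - Rᵀ) := by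
  set t := R.trace
  set b : ℝ[X] := X - (X ^ 2 - C t * X + C t)
  have hdvd : (X ^ 3 - C t * X ^ 2 + C t * X - 1 : ℝ[X]) ∣ b ^ 3 + ((3 - t) * (1 + t)) • b :=
    ⟨-(X - C t) * (X ^ 2 - (C t + 3) * X + (2 * C t + 3)), by
      simp only [b, smul_eq_C_mul, C_mul, C_sub, C_add, C_1, C_ofNat]; ring⟩
  have h := aeval_eq_zero_of_dvd_aeval_eq_zero hdvd (aeval_cubic_eq_zero hR)
  rw [map_add, map_smul, map_pow, ← sub_transpose_eq_aeval hR] at h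
  linear_combination (norm := module) h

lemma sub_transpose_sq (hR : SO3 R) :
    (R - Rᵀ) ^ 2 = (2 * (1 + R.trace)) • (R - 1) - (1 + R.trace) • (R - Rᵀ) := by
  set t := R.trace
  set b : ℝ[X] := X - (X ^ 2 - C t * X + C t)
  have hdvd : (X ^ 3 - C t * X ^ 2 + C t * X - 1 : ℝ[X]) ∣
      b ^ 2 + (1 + t) • b - (2 * (1 + t)) • (X - 1) :=
    ⟨X - (C t + 2), by simp only [b, smul_eq_C_mul, C_mul, C_add, C_1, C_ofNat]; ring⟩
  have h := aeval_eq_zero_of_dvd_aeval_eq_zero hdvd (aeval_cubic_eq_zero hR)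
  rw [map_sub, map_add, map_smul, map_smul, map_pow, ← sub_transpose_eq_aeval hR, map_sub,
    aeval_X, map_one] at h
  linear_combination (norm := module) h

end SO3

lemma cos_rotAngle {R : Matrix (Fin 3) (Fin 3) ℝ} (hθ : rotAngle R ∈ Set.Ioo 0 π) :
    cos (rotAngle R) = (R.trace - 1) / 2 :=
  cos_arccos (arccos_lt_pi.mp hθ.2).le (arccos_pos.mp hθ.1).le

/-- For every `R ∈ SO(3)` with `θ(R) ∈ (0, π)`, `exp(Log(R)) = R`. -/
theorem exp_matLog (R : Matrix (Fin 3) (Fin 3) ℝ) (hR : SO3 R)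
    (hθ : rotAngle R ∈ Set.Ioo 0 π) :
    NormedSpace.exp (matLog R) = R := by
  have hcos := cos_rotAngle hθ
  obtain ⟨hθ0, hθπ⟩ := hθ
  set θ := rotAngle R
  set t := R.trace
  set B := R - Rᵀ
  have hsin : 0 < sin θ := sin_pos_of_pos_of_lt_pi hθ0 hθπ
  have hsin_sq : 4 * sin θ ^ 2 = (3 - t) * (1 + t) := by
    linear_combination 4 * sin_sq_add_cos_sq θ - 2 * (t - 1 + 2 * cos θ) * hcos
  have ht : 0 < 1 + t := by nlinarith
  have hW : ((θ / (2 * sin θ)) • B) ^ 3 = (-θ ^ 2) • (θ / (2 * sin θ)) • B := by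
    rw [_root_.smul_pow, SO3.sub_transpose_pow_three hR, smul_smul, smul_smul, ← hsin_sq]
    congr 1
    field_simp
    ring
  have hlin : sin θ / θ * (θ / (2 * sin θ)) = 1 / 2 := by
    field_simp
  have hquad : (1 - cos θ) / θ ^ 2 * (θ / (2 * sin θ)) ^ 2 * (2 * (1 + t)) = 1 := by
    field_simp
    linear_combination -(1 / 2) * hsin_sq - (1 + t) * hcos
  rw [matLog, if_neg hθ0.ne', NormedSpace.exp_of_pow_three_eq_neg_sq_smul hθ0.ne' hW,
    _root_.smul_pow, SO3.sub_transpose_sq hR]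
  linear_combination (norm := module) hlin • B + hquad • (R - 1) - (1 / 2 : ℝ) • hquad • B
end

section
/- (Distributed pairwise-consistency initialization for rotations) Let A, B ∈ SO(3) with θ(Aᵀ Bᵀ) < π, and define the averaged measurements A' := A · exp((1/2) Log(Aᵀ Bᵀ)) and B' := B · exp((1/2) Log(Bᵀ Aᵀ)). Then A' B' = I; that is, the averaged pair of relative rotation measurements is pairwise consistent. -/
open Matrix Real

/-!
Put `C = Aᵀ Bᵀ ∈ SO(3)`. Because `θ(C) < π`, `Log C` is a genuine logarithm: writing
`Log C = θ K` with `K = (C - Cᵀ)/(2 sin θ)`, Cayley–Hamilton for rotations gives `K³ = -K`,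
and Rodrigues' formula `exp(θ K) = 1 + sin θ K + (1 - cos θ) K²` then evaluates to `C`.
Hence `E = exp(½ Log C)` is a square root of `C`. Since `Bᵀ Aᵀ = Bᵀ C B` and both `Log` and
`exp` commute with conjugation by the orthogonal matrix `B`, the second factor is
`B Bᵀ E B = E B`, and `A' B' = A E E B = A Aᵀ Bᵀ B = 1`.
-/

namespace Matrix

section Orthogonal

variable {n : Type*} [Fintype n] [DecidableEq n] {R : Matrix n n ℝ}

lemma trace_sub_one_transpose_mul_sub_one (hR : Rᵀ * R = 1) :
    trace ((R - 1)ᵀ * (R - 1)) = 2 * (Fintype.card n - trace R) := by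
  have hRt : trace Rᵀ = trace R := trace_transpose R
  simp only [transpose_sub, transpose_one, sub_mul, mul_sub, hR, mul_one, one_mul,
    trace_sub, trace_one, hRt]
  ring

lemma trace_le_card_of_transpose_mul_self_eq_one (hR : Rᵀ * R = 1) :
    trace R ≤ Fintype.card n := by
  have h := (posSemidef_conjTranspose_mul_self (R - 1)).trace_nonneg
  rw [conjTranspose_eq_transpose_of_trivial, trace_sub_one_transpose_mul_sub_one hR] at h
  linarith

lemma eq_one_of_trace_eq_card (hR : Rᵀ * R = 1) (ht : trace R = Fintype.card n) : R = 1 := by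
  have h : trace ((R - 1)ᴴ * (R - 1)) = 0 := by
    rw [conjTranspose_eq_transpose_of_trivial, trace_sub_one_transpose_mul_sub_one hR, ht, sub_self,
      mul_zero]
  exact sub_eq_zero.mp (trace_conjTranspose_mul_self_eq_zero_iff.mp h)

end Orthogonal

lemma adjugate_fin_three_eq {α : Type*} [CommRing α] (R : Matrix (Fin 3) (Fin 3) α) :
    adjugate R = R * R - trace R • R + trace (adjugate R) • 1 := by
  ext i j
  fin_cases i <;> fin_cases j <;>
    simp [adjugate_fin_three, trace_fin_three, mul_apply, Fin.sum_univ_three] <;>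
    ring

end Matrix

section Rodrigues

open NormedSpace Nat

variable {𝔸 : Type*} [Ring 𝔸] [Algebra ℝ 𝔸] {K : 𝔸}

lemma pow_two_mul_add_one_of_mul_mul_self_eq_neg (hK : K * K * K = -K) (n : ℕ) :
    K ^ (2 * n + 1) = ((-1 : ℝ) ^ n) • K := by
  induction n with
  | zero => simp
  | succ n ih =>
    rw [show 2 * (n + 1) + 1 = 2 + (2 * n + 1) by ring, pow_add, ih, mul_smul_comm, sq, hK,
      pow_succ, mul_comm, mul_smul, neg_one_smul, smul_neg]

lemma pow_two_mul_add_two_of_mul_mul_self_eq_neg (hK : K * K * K = -K) (n : ℕ) :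
    K ^ (2 * n + 2) = ((-1 : ℝ) ^ n) • (K * K) := by
  rw [pow_succ, pow_two_mul_add_one_of_mul_mul_self_eq_neg hK, smul_mul_assoc]

variable [TopologicalSpace 𝔸] [ContinuousSMul ℝ 𝔸]

lemma hasSum_exp_series_odd_of_mul_mul_self_eq_neg (hK : K * K * K = -K) (θ : ℝ) :
    HasSum (fun n : ℕ => ((2 * n + 1)! : ℝ)⁻¹ • (θ • K) ^ (2 * n + 1))
      (sin θ • K) := by
  convert! (Real.hasSum_sin θ).smul_const K using 1
  ext n : 1
  rw [smul_pow, pow_two_mul_add_one_of_mul_mul_self_eq_neg hK, smul_smul, smul_smul]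
  congr 1
  field_simp

variable [IsTopologicalRing 𝔸]

lemma hasSum_exp_series_even_of_mul_mul_self_eq_neg (hK : K * K * K = -K) (θ : ℝ) :
    HasSum (fun n : ℕ => ((2 * n)! : ℝ)⁻¹ • (θ • K) ^ (2 * n))
      (1 + (1 - cos θ) • (K * K)) := by
  refine (hasSum_nat_add_iff' 1).mp ?_
  convert! ((hasSum_nat_add_iff' 1).mpr (Real.hasSum_cos θ)).neg.smul_const (K * K) using 1
  · ext n : 1
    rw [smul_pow, show 2 * (n + 1) = 2 * n + 2 by ring,
      pow_two_mul_add_two_of_mul_mul_self_eq_neg hK, smul_smul, smul_smul]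
    congr 1
    field_simp
    ring
  · simp

/-- Rodrigues' formula. -/
theorem exp_smul_of_mul_mul_self_eq_neg [T2Space 𝔸] (hK : K * K * K = -K) (θ : ℝ) :
    exp (θ • K) = 1 + sin θ • K + (1 - cos θ) • (K * K) := by
  have h : HasSum (fun n : ℕ => (n ! : ℝ)⁻¹ • (θ • K) ^ n)
      (1 + (1 - cos θ) • (K * K) + sin θ • K) :=
    (hasSum_exp_series_even_of_mul_mul_self_eq_neg hK θ).even_add_odd
      (hasSum_exp_series_odd_of_mul_mul_self_eq_neg hK θ)
  rw [exp_eq_tsum ℝ, add_right_comm]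
  exact h.tsum_eq

end Rodrigues

section Conjugation

open NormedSpace

lemma Matrix.exp_transpose_mul_mul {n : Type*} [Fintype n] [DecidableEq n]
    {Q : Matrix n n ℝ} (hQ : Qᵀ * Q = 1) (X : Matrix n n ℝ) :
    exp (Qᵀ * X * Q) = Qᵀ * exp X * Q := by
  have hQu : IsUnit Q := (isUnit_iff_isUnit_det Q).mpr (isUnit_det_of_left_inverse hQ)
  simpa only [inv_eq_left_inv hQ] using Matrix.exp_conj' Q X hQu

variable {Q : Matrix (Fin 3) (Fin 3) ℝ}

lemma rotAngle_transpose_mul_mul (hQ : Q * Qᵀ = 1) (R : Matrix (Fin 3) (Fin 3) ℝ) :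
    rotAngle (Qᵀ * R * Q) = rotAngle R := by
  rw [rotAngle, trace_mul_comm, ← mul_assoc, hQ, one_mul, rotAngle]

lemma matLog_transpose_mul_mul (hQ : Q * Qᵀ = 1) (R : Matrix (Fin 3) (Fin 3) ℝ) :
    matLog (Qᵀ * R * Q) = Qᵀ * matLog R * Q := by
  have hskew : Qᵀ * R * Q - (Qᵀ * R * Q)ᵀ = Qᵀ * (R - Rᵀ) * Q := by
    simp only [transpose_mul, transpose_transpose, mul_sub, sub_mul, mul_assoc]
  rw [matLog, matLog, rotAngle_transpose_mul_mul hQ]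
  split_ifs
  · rw [mul_zero, zero_mul]
  · rw [hskew, Matrix.mul_smul, Matrix.smul_mul]

end Conjugation

namespace SO3

variable {R S : Matrix (Fin 3) (Fin 3) ℝ}

lemma mul_transpose_self (hR : SO3 R) : R * Rᵀ = 1 := mul_eq_one_comm.mp hR.1

lemma transpose (hR : SO3 R) : SO3 Rᵀ :=
  ⟨by rw [transpose_transpose, hR.mul_transpose_self], by rw [det_transpose, hR.2]⟩

lemma mul (hR : SO3 R) (hS : SO3 S) : SO3 (R * S) := by
  refine ⟨?_, by rw [det_mul, hR.2, hS.2, one_mul]⟩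
  rw [transpose_mul, mul_assoc, ← mul_assoc Rᵀ, hR.1, one_mul, hS.1]

lemma adjugate_eq (hR : SO3 R) : adjugate R = Rᵀ := by
  calc adjugate R = adjugate R * R * Rᵀ := by rw [mul_assoc, hR.mul_transpose_self, mul_one]
    _ = Rᵀ := by rw [adjugate_mul, hR.2, one_smul, one_mul]

/-- Cayley–Hamilton for a rotation, whose characteristic polynomial is
`X³ - t X² + t X - 1` with `t = tr R`. -/
lemma mul_self_eq (hR : SO3 R) : R * R = trace R • R - trace R • 1 + Rᵀ := by
  have h := adjugate_fin_three_eq R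
  rw [hR.adjugate_eq, trace_transpose] at h
  rw [h]
  abel

lemma skew_mul_skew (hR : SO3 R) :
    (R - Rᵀ) * (R - Rᵀ) = (trace R + 1) • (R + Rᵀ - 2) := by
  have hRt := hR.transpose.mul_self_eq
  rw [trace_transpose, transpose_transpose] at hRt
  rw [← one_add_one_eq_two, sub_mul, mul_sub, mul_sub, hR.mul_self_eq, hRt, hR.1,
    hR.mul_transpose_self]
  module

lemma sym_mul_skew (hR : SO3 R) :
    (R + Rᵀ - 2) * (R - Rᵀ) = (trace R - 3) • (R - Rᵀ) := by
  have hRt := hR.transpose.mul_self_eq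
  rw [trace_transpose, transpose_transpose] at hRt
  rw [← one_add_one_eq_two, sub_mul, add_mul, add_mul, one_mul, mul_sub, mul_sub,
    hR.mul_self_eq, hRt, hR.1, hR.mul_transpose_self]
  module

lemma trace_le_three (hR : SO3 R) : trace R ≤ 3 := by
  simpa using trace_le_card_of_transpose_mul_self_eq_one hR.1

open NormedSpace in
theorem exp_matLog (hR : SO3 R) (hθ : rotAngle R < π) : exp (matLog R) = R := by
  have ht : -1 < (trace R - 1) / 2 := arccos_lt_pi.mp hθ
  by_cases h0 : rotAngle R = 0
  · have ht3 : trace R = 3 := le_antisymm hR.trace_le_three (by linarith [arccos_eq_zero.mp h0])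
    rw [matLog, if_pos h0, NormedSpace.exp_zero,
      eq_one_of_trace_eq_card hR.1 (by simpa using ht3)]
  set θ := rotAngle R
  set t := trace R
  have hθ0 : 0 < θ := (arccos_nonneg _).lt_of_ne' h0
  have ht3 : t < 3 := by linarith [arccos_pos.mp hθ0]
  have hs : 0 < sin θ := sin_pos_of_pos_of_lt_pi hθ0 hθ
  have hc : cos θ = (t - 1) / 2 := cos_arccos (by linarith) (by linarith)
  have hsc : 4 * sin θ ^ 2 = (3 - t) * (t + 1) := by
    rw [sin_sq, hc]; ring
  have ht3' : 3 - t ≠ 0 := by linarith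
  set K := (2 * sin θ)⁻¹ • (R - Rᵀ)
  have hlog : matLog R = θ • K := by
    rw [matLog, if_neg h0, smul_smul, div_eq_mul_inv]
  have hKK : K * K = (3 - t)⁻¹ • (R + Rᵀ - 2) := by
    rw [smul_mul_smul_comm, hR.skew_mul_skew, smul_smul]
    congr 1
    field_simp
    linear_combination -hsc
  have hKKK : K * K * K = -K := by
    rw [hKK, smul_mul_smul_comm, hR.sym_mul_skew, smul_smul, ← neg_smul]
    congr 1
    field_simp
    ring
  rw [hlog, exp_smul_of_mul_mul_self_eq_neg hKKK, hKK, hc,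
    show (2 : Matrix (Fin 3) (Fin 3) ℝ) = (2 : ℝ) • 1 by rw [two_smul, one_add_one_eq_two]]
  match_scalars <;> field_simp <;> ring

end SO3

/-- (Distributed pairwise-consistency initialization for rotations.) For
`A, B ∈ SO(3)` with `θ(Aᵀ Bᵀ) < π`, the averaged measurements
`A' = A·exp((1/2) Log(Aᵀ Bᵀ))` and `B' = B·exp((1/2) Log(Bᵀ Aᵀ))` satisfy `A' B' = I`. -/
theorem pairwise_initialization (A B : Matrix (Fin 3) (Fin 3) ℝ)
    (hA : SO3 A) (hB : SO3 B) (hθ : rotAngle (Aᵀ * Bᵀ) < π) :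
    (A * NormedSpace.exp ((1 / 2 : ℝ) • matLog (Aᵀ * Bᵀ))) *
      (B * NormedSpace.exp ((1 / 2 : ℝ) • matLog (Bᵀ * Aᵀ))) = 1 := by
  have hC : SO3 (Aᵀ * Bᵀ) := hA.transpose.mul hB.transpose
  have hBA : Bᵀ * Aᵀ = Bᵀ * (Aᵀ * Bᵀ) * B := by rw [mul_assoc, mul_assoc, hB.1, mul_one]
  set E := NormedSpace.exp ((1 / 2 : ℝ) • matLog (Aᵀ * Bᵀ))
  have hEE : E * E = Aᵀ * Bᵀ := by
    rw [← Matrix.exp_add_of_commute _ _ (Commute.refl _), ← add_smul, add_halves, one_smul,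
      hC.exp_matLog hθ]
  rw [hBA, matLog_transpose_mul_mul hB.mul_transpose_self, ← Matrix.smul_mul, ← Matrix.mul_smul,
    Matrix.exp_transpose_mul_mul hB.1]
  calc A * E * (B * (Bᵀ * E * B)) = A * (E * E) * B := by
        simp only [← mul_assoc, hB.mul_transpose_self, one_mul]
    _ = 1 := by rw [hEE, ← mul_assoc, hA.mul_transpose_self, one_mul, hB.1]
end

section
/- (Convergence of the coupled translation estimation) Let G be a connected simple graph on a finite nonempty vertex set V. Let δ : [0,∞) → (V → ℝ³) be continuous with Σ_{i∈V} δ_i(s) = 0 for all s ≥ 0 (minimal consistency) and δ(s) → δ_∞ as s → ∞ for some δ_∞ : V → ℝ³. Suppose t : [0,∞) → (V → ℝ³) satisfies, for every i ∈ V and every s ≥ 0, the translation dynamics: t_i has derivative Σ_{j: j adjacent to i} (t_j(s) − t_i(s)) − δ_i(s) at s. Then there exists t_eq : V → ℝ³ such that t(s) → t_eq as s → ∞, and t_eq is an equilibrium: Σ_{j: j adjacent to i} (t_eq(j) − t_eq(i)) = δ_∞(i) for every i ∈ V. -/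
/-!
Let `t_eq` be an equilibrium with the same vertex sum as `t 0`; the vertex sum of `t` is conserved
because the offsets have zero sum. The error `z = t - t_eq` then follows the consensus flow
perturbed by `δ - δ_∞` and keeps zero sum. On zero-sum configurations the Laplacian of a connected
graph has a spectral gap `c > 0` (compactness of the unit sphere), so with Young's inequality
`Φ = ∑ ‖z_i‖²` satisfies `Φ' ≤ -(c/2) Φ + (2/c) ∑ ‖δ_i - δ_∞,i‖²`, and Grönwall's inequality
forces `Φ → 0`.
-/

open Filter Topology
open scoped RealInnerProductSpace

theorem tendsto_zero_of_hasDerivAt_le_neg_mul_add {Φ Φ' β : ℝ → ℝ} {c : ℝ} (hc : 0 < c)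
    (hΦ : ∀ᶠ s in atTop, 0 ≤ Φ s) (hderiv : ∀ᶠ s in atTop, HasDerivAt Φ (Φ' s) s)
    (hle : ∀ᶠ s in atTop, Φ' s ≤ -c * Φ s + β s) (hβ : Tendsto β atTop (𝓝 0)) :
    Tendsto Φ atTop (𝓝 0) := by
  refine tendsto_order.2 ⟨fun a ha => hΦ.mono fun s hs => ha.trans_le hs, fun ε hε => ?_⟩
  obtain ⟨S, hS⟩ := eventually_atTop.1 <| (hderiv.and hle).and <|
    (tendsto_order.1 hβ).2 (c * ε / 2) (by positivity)
  have hgronwall : ∀ x ≥ S, Φ x ≤ Φ S * Real.exp (-c * (x - S)) + ε / 2 := by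
    intro x hx
    have hbound := le_gronwallBound_of_liminf_deriv_right_le (f' := Φ') (δ := Φ S) (K := -c)
      (ε := c * ε / 2) (a := S) (b := x)
      (fun y hy => (hS y hy.1).1.1.continuousAt.continuousWithinAt)
      (fun y hy r hr => (hS y hy.1).1.1.hasDerivWithinAt.liminf_right_slope_le hr) le_rfl
      (fun y hy => ((hS y hy.1).1.2).trans (by linarith [(hS y hy.1).2]))
      x ⟨hx, le_rfl⟩
    rw [gronwallBound_of_K_ne_0 (neg_ne_zero.2 hc.ne')] at hbound
    have hexp : 0 < Real.exp (-c * (x - S)) := Real.exp_pos _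
    have hforcing : c * ε / 2 / -c * (Real.exp (-c * (x - S)) - 1) ≤ ε / 2 := by
      rw [show c * ε / 2 / -c = -(ε / 2) by field_simp]
      nlinarith
    linarith
  have hdecay : Tendsto (fun x => Φ S * Real.exp (-c * (x - S)) + ε / 2) atTop (𝓝 (ε / 2)) := by
    have : Tendsto (fun x => -c * (x - S)) atTop atBot :=
      (tendsto_atTop_add_const_right _ _ tendsto_id).const_mul_atTop_of_neg (neg_lt_zero.2 hc)
    simpa using ((Real.tendsto_exp_atBot.comp this).const_mul (Φ S)).add_const (ε / 2)
  filter_upwards [eventually_ge_atTop S, (tendsto_order.1 hdecay).2 ε (by linarith)] with x hx hlt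
  exact (hgronwall x hx).trans_lt hlt

theorem neg_two_mul_inner_le {E : Type*} [NormedAddCommGroup E] [InnerProductSpace ℝ E] {c : ℝ}
    (hc : 0 < c) (a b : E) : -(2 * ⟪a, b⟫) ≤ c / 2 * ‖a‖ ^ 2 + 2 / c * ‖b‖ ^ 2 := by
  have hcs : -⟪a, b⟫ ≤ ‖a‖ * ‖b‖ := (neg_le_abs _).trans (abs_real_inner_le_norm a b)
  have hsq : c / 2 * ‖a‖ ^ 2 + 2 / c * ‖b‖ ^ 2 - 2 * (‖a‖ * ‖b‖) =
      (c * ‖a‖ - 2 * ‖b‖) ^ 2 / (2 * c) := by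
    field_simp
    ring
  have hsq_nonneg : 0 ≤ (c * ‖a‖ - 2 * ‖b‖) ^ 2 / (2 * c) := by positivity
  linarith

namespace SimpleGraph

variable {V : Type*} [Fintype V] (G : SimpleGraph V) [DecidableRel G.Adj]

theorem sum_neighborFinset_comm {M : Type*} [AddCommMonoid M] (f : V → V → M) :
    ∑ i, ∑ j ∈ G.neighborFinset i, f i j = ∑ i, ∑ j ∈ G.neighborFinset i, f j i :=
  Finset.sum_comm' fun i j => by simp [G.adj_comm]

section Module

variable {M : Type*} [AddCommGroup M] [Module ℝ M]

/-- The field `-(L ⊗ I)` of the translation dynamics, `L` the Laplacian of the graph. -/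
noncomputable def consensusField : (V → M) →ₗ[ℝ] (V → M) where
  toFun z i := ∑ j ∈ G.neighborFinset i, (z j - z i)
  map_add' x y := by
    funext i
    simp only [Pi.add_apply, ← Finset.sum_add_distrib]
    exact Finset.sum_congr rfl fun _ _ => add_sub_add_comm _ _ _ _
  map_smul' a x := by
    funext i
    simp only [Pi.smul_apply, RingHom.id_apply, Finset.smul_sum, smul_sub]

@[simp]
theorem consensusField_apply (z : V → M) (i : V) :
    G.consensusField z i = ∑ j ∈ G.neighborFinset i, (z j - z i) := rfl

theorem sum_consensusField (z : V → M) : ∑ i, G.consensusField z i = 0 := by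
  simp only [consensusField_apply, Finset.sum_sub_distrib]
  rw [G.sum_neighborFinset_comm (fun _ j => z j), sub_self]

end Module

section Normed

variable {E : Type*} [NormedAddCommGroup E]

noncomputable def dirichletEnergy (z : V → E) : ℝ :=
  ∑ i, ∑ j ∈ G.neighborFinset i, ‖z j - z i‖ ^ 2

theorem dirichletEnergy_nonneg (z : V → E) : 0 ≤ G.dirichletEnergy z :=
  Finset.sum_nonneg fun _ _ => Finset.sum_nonneg fun _ _ => sq_nonneg _

theorem continuous_dirichletEnergy : Continuous (G.dirichletEnergy (E := E)) := by
  unfold dirichletEnergy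
  fun_prop

theorem eq_of_dirichletEnergy_eq_zero (hconn : G.Connected) {z : V → E}
    (h : G.dirichletEnergy z = 0) (i j : V) : z i = z j := by
  have hadj : ∀ i j, G.Adj i j → z i = z j := fun i j hij => by
    have := (Finset.sum_eq_zero_iff_of_nonneg fun _ _ => Finset.sum_nonneg fun _ _ =>
      sq_nonneg _).1 h i (Finset.mem_univ i)
    have := (Finset.sum_eq_zero_iff_of_nonneg fun _ _ => sq_nonneg _).1 this j
      ((G.mem_neighborFinset i j).2 hij)
    exact (sub_eq_zero.1 (norm_eq_zero.1 (pow_eq_zero_iff two_ne_zero |>.1 this))).symm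
  obtain ⟨w⟩ := hconn.preconnected i j
  induction w with
  | nil => rfl
  | cons h _ ih => exact (hadj _ _ h).trans ih

variable [NormedSpace ℝ E]

theorem dirichletEnergy_smul (a : ℝ) (z : V → E) :
    G.dirichletEnergy (a • z) = a ^ 2 * G.dirichletEnergy z := by
  simp only [dirichletEnergy, Pi.smul_apply, ← smul_sub, norm_smul, mul_pow, Real.norm_eq_abs,
    sq_abs, Finset.mul_sum]

theorem eq_zero_of_dirichletEnergy_eq_zero (hconn : G.Connected) {z : V → E}
    (hsum : ∑ i, z i = 0) (h : G.dirichletEnergy z = 0) : z = 0 := by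
  have := hconn.nonempty
  funext i
  have hconst : ∑ j, z j = Fintype.card V • z i := by
    simp [G.eq_of_dirichletEnergy_eq_zero hconn h _ i]
  rw [hsum, eq_comm, ← Nat.cast_smul_eq_nsmul ℝ, smul_eq_zero] at hconst
  exact hconst.resolve_left (Nat.cast_ne_zero.2 Fintype.card_ne_zero)

end Normed

variable {E : Type*} [NormedAddCommGroup E] [InnerProductSpace ℝ E]

theorem two_mul_sum_inner_consensusField (z : V → E) :
    2 * ∑ i, ⟪z i, G.consensusField z i⟫ = -G.dirichletEnergy z := by
  have hswap := G.sum_neighborFinset_comm fun i j => ⟪z i, z j - z i⟫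
  simp only [consensusField_apply, inner_sum, dirichletEnergy, two_mul]
  nth_rewrite 2 [hswap]
  simp only [← Finset.sum_add_distrib, ← Finset.sum_neg_distrib]
  refine Finset.sum_congr rfl fun i _ => Finset.sum_congr rfl fun j _ => ?_
  rw [← real_inner_self_eq_norm_sq, ← neg_sub (z j) (z i), inner_neg_right, inner_sub_left]
  ring

theorem eq_zero_of_consensusField_eq_zero (hconn : G.Connected) {z : V → E}
    (hsum : ∑ i, z i = 0) (h : G.consensusField z = 0) : z = 0 := by
  have henergy := G.two_mul_sum_inner_consensusField z
  rw [h] at henergy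
  exact G.eq_zero_of_dirichletEnergy_eq_zero hconn hsum (by simpa using henergy.symm)

theorem exists_pos_mul_sum_norm_sq_le_dirichletEnergy [FiniteDimensional ℝ E]
    (hconn : G.Connected) :
    ∃ c > 0, ∀ z : V → E, ∑ i, z i = 0 → c * ∑ i, ‖z i‖ ^ 2 ≤ G.dirichletEnergy z := by
  set K := Metric.sphere (0 : V → E) 1 ∩ {z | ∑ i, z i = 0}
  have hK : IsCompact K := (isCompact_sphere 0 1).inter_right <|
    isClosed_eq (continuous_finsetSum _ fun i _ => continuous_apply i) continuous_const
  obtain ⟨m, hm, hmK⟩ := hK.exists_forall_le' (G.continuous_dirichletEnergy.continuousOn)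
    (a := 0) fun z hz => (G.dirichletEnergy_nonneg z).lt_of_ne' fun h => by
      simpa [G.eq_zero_of_dirichletEnergy_eq_zero hconn hz.2 h] using hz.1
  have := hconn.nonempty
  refine ⟨m / Fintype.card V, by positivity, fun z hz => ?_⟩
  have hsup : m * ‖z‖ ^ 2 ≤ G.dirichletEnergy z := by
    rcases eq_or_ne z 0 with rfl | hz0
    · simpa using G.dirichletEnergy_nonneg 0
    have hnorm : 0 < ‖z‖ := norm_pos_iff.2 hz0
    have hw : ‖z‖⁻¹ • z ∈ K := ⟨by simp [norm_smul, hnorm.ne'], by simp [← Finset.smul_sum, hz]⟩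
    have := hmK _ hw
    rw [G.dirichletEnergy_smul, inv_pow, ← div_eq_inv_mul, le_div_iff₀ (by positivity)] at this
    exact this
  have hpi : ∑ i, ‖z i‖ ^ 2 ≤ Fintype.card V * ‖z‖ ^ 2 := by
    calc ∑ i, ‖z i‖ ^ 2 ≤ ∑ _i : V, ‖z‖ ^ 2 :=
          Finset.sum_le_sum fun i _ => pow_le_pow_left₀ (norm_nonneg _) (norm_le_pi_norm z i) 2
      _ = Fintype.card V * ‖z‖ ^ 2 := by simp
  calc m / Fintype.card V * ∑ i, ‖z i‖ ^ 2 ≤ m / Fintype.card V * (Fintype.card V * ‖z‖ ^ 2) :=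
        mul_le_mul_of_nonneg_left hpi (by positivity)
    _ = m * ‖z‖ ^ 2 := by field_simp
    _ ≤ G.dirichletEnergy z := hsup

theorem exists_consensusField_eq [FiniteDimensional ℝ E] (hconn : G.Connected) {w : V → E}
    (hw : ∑ i, w i = 0) (a : E) : ∃ y : V → E, ∑ i, y i = a ∧ G.consensusField y = w := by
  have := hconn.nonempty
  set S := LinearMap.ker (∑ i, LinearMap.proj i : (V → E) →ₗ[ℝ] E)
  have hS {z : V → E} : z ∈ S ↔ ∑ i, z i = 0 := by simp [S, LinearMap.sum_apply]
  have hmaps : ∀ z ∈ S, G.consensusField z ∈ S := fun z _ => hS.2 (G.sum_consensusField z)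
  have hinj : Function.Injective (G.consensusField.restrict hmaps) :=
    (injective_iff_map_eq_zero _).2 fun z hz => Subtype.ext <|
      G.eq_zero_of_consensusField_eq_zero hconn (hS.1 z.2) (congrArg Subtype.val hz)
  obtain ⟨y, hy⟩ := LinearMap.injective_iff_surjective.1 hinj ⟨w, hS.2 hw⟩
  refine ⟨(y : V → E) + fun _ => (Fintype.card V : ℝ)⁻¹ • a, ?_, ?_⟩
  · simp [Finset.sum_add_distrib, hS.1 y.2, ← Nat.cast_smul_eq_nsmul ℝ]
  · ext1 i
    simpa using congrFun (congrArg Subtype.val hy) i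

theorem sum_eq_of_hasDerivAt_consensusField_sub {M : Type*} [NormedAddCommGroup M]
    [NormedSpace ℝ M] {z e : ℝ → V → M} (he : ∀ s, 0 ≤ s → ∑ i, e s i = 0)
    (hz : ∀ i, ∀ s, 0 ≤ s →
      HasDerivAt (fun u => z u i) (G.consensusField (z s) i - e s i) s)
    {s : ℝ} (hs : 0 ≤ s) : ∑ i, z s i = ∑ i, z 0 i := by
  have hsum (x : ℝ) (hx : 0 ≤ x) : HasDerivAt (fun u => ∑ i, z u i) 0 x := by
    have := HasDerivAt.fun_sum (u := Finset.univ) fun i _ => hz i x hx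
    rwa [Finset.sum_sub_distrib, G.sum_consensusField, he x hx, sub_zero] at this
  exact constant_of_has_deriv_right_zero
    (fun x hx => (hsum x hx.1).continuousAt.continuousWithinAt)
    (fun x hx => (hsum x hx.1).hasDerivWithinAt) s ⟨hs, le_rfl⟩

theorem tendsto_zero_of_hasDerivAt_consensusField_sub [FiniteDimensional ℝ E]
    (hconn : G.Connected) {z e : ℝ → V → E} (hz0 : ∑ i, z 0 i = 0)
    (he_sum : ∀ s, 0 ≤ s → ∑ i, e s i = 0) (he : Tendsto e atTop (𝓝 0))
    (hz : ∀ i, ∀ s, 0 ≤ s →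
      HasDerivAt (fun u => z u i) (G.consensusField (z s) i - e s i) s) :
    Tendsto z atTop (𝓝 0) := by
  obtain ⟨c, hc, hpoincare⟩ := G.exists_pos_mul_sum_norm_sq_le_dirichletEnergy (E := E) hconn
  set Φ : ℝ → ℝ := fun s => ∑ i, ‖z s i‖ ^ 2
  have hderiv (s : ℝ) (hs : 0 ≤ s) :
      HasDerivAt Φ (∑ i, 2 * ⟪z s i, G.consensusField (z s) i - e s i⟫) s :=
    HasDerivAt.fun_sum fun i _ => (hz i s hs).norm_sq
  have hbound (s : ℝ) (hs : 0 ≤ s) : ∑ i, 2 * ⟪z s i, G.consensusField (z s) i - e s i⟫ ≤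
      -(c / 2) * Φ s + 2 / c * ∑ i, ‖e s i‖ ^ 2 := by
    have henergy := G.two_mul_sum_inner_consensusField (z s)
    have hgap := hpoincare (z s) (hz0 ▸ G.sum_eq_of_hasDerivAt_consensusField_sub he_sum hz hs)
    have hyoung := Finset.sum_le_sum fun i (_ : i ∈ Finset.univ) =>
      neg_two_mul_inner_le hc (z s i) (e s i)
    simp only [inner_sub_right, mul_sub, Finset.sum_sub_distrib, ← Finset.mul_sum,
      Finset.sum_add_distrib, Finset.sum_neg_distrib] at henergy hyoung ⊢
    linarith
  have he_sq : Tendsto (fun s => 2 / c * ∑ i, ‖e s i‖ ^ 2) atTop (𝓝 0) := by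
    simpa using (((by fun_prop : Continuous fun x : V → E => ∑ i, ‖x i‖ ^ 2).tendsto 0).comp
      he).const_mul (2 / c)
  have hΦ : Tendsto Φ atTop (𝓝 0) :=
    tendsto_zero_of_hasDerivAt_le_neg_mul_add (half_pos hc)
      (Eventually.of_forall fun s => by positivity)
      ((eventually_ge_atTop 0).mono hderiv) ((eventually_ge_atTop 0).mono hbound) he_sq
  refine tendsto_pi_nhds.2 fun i => tendsto_zero_iff_norm_tendsto_zero.2 ?_
  have hsq : Tendsto (fun s => ‖z s i‖ ^ 2) atTop (𝓝 0) :=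
    squeeze_zero (fun s => by positivity) (fun s => Finset.single_le_sum
      (f := fun j => ‖z s j‖ ^ 2) (fun j _ => by positivity) (Finset.mem_univ i)) hΦ
  simpa using hsq.sqrt

end SimpleGraph

theorem coupled_translation_convergence_general {V : Type*} [Fintype V]
    (G : SimpleGraph V) [DecidableRel G.Adj] (hconn : G.Connected)
    (δ : ℝ → V → EuclideanSpace ℝ (Fin 3))
    (hδmin : ∀ s, 0 ≤ s → ∑ i, δ s i = 0)
    (δlimit : V → EuclideanSpace ℝ (Fin 3))
    (hδlim : Tendsto δ atTop (nhds δlimit))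
    (t : ℝ → V → EuclideanSpace ℝ (Fin 3))
    (hdyn : ∀ i, ∀ s, 0 ≤ s → HasDerivAt (fun u => t u i)
      ((∑ j ∈ G.neighborFinset i, (t s j - t s i)) - δ s i) s) :
    ∃ teq : V → EuclideanSpace ℝ (Fin 3),
      Tendsto t atTop (nhds teq) ∧
      ∀ i, ∑ j ∈ G.neighborFinset i, (teq j - teq i) = δlimit i := by
  have hsum_limit : ∑ i, δlimit i = 0 :=
    tendsto_nhds_unique_of_eventuallyEq
      (tendsto_finsetSum _ fun i _ => tendsto_pi_nhds.1 hδlim i) tendsto_const_nhds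
      ((eventually_ge_atTop 0).mono hδmin)
  obtain ⟨teq, hteq_sum, hteq⟩ := G.exists_consensusField_eq hconn hsum_limit (∑ i, t 0 i)
  refine ⟨teq, tendsto_sub_nhds_zero_iff.1 ?_, fun i => congrFun hteq i⟩
  refine G.tendsto_zero_of_hasDerivAt_consensusField_sub hconn (e := fun s => δ s - δlimit)
    (by simp [Finset.sum_sub_distrib, hteq_sum])
    (fun s hs => by simp [Finset.sum_sub_distrib, hδmin s hs, hsum_limit])
    (tendsto_sub_nhds_zero_iff.2 hδlim) fun i s hs => ?_
  have hfield : G.consensusField (t s - teq) i - (δ s - δlimit) i =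
      ∑ j ∈ G.neighborFinset i, (t s j - t s i) - δ s i := by
    rw [map_sub, Pi.sub_apply, Pi.sub_apply, hteq, G.consensusField_apply]
    abel
  rw [hfield]
  exact (hdyn i s hs).sub_const (teq i)

/-- (Convergence of the coupled translation estimation.) Let `G` be a connected simple
graph on a finite nonempty vertex set `V`, and let `δ : [0,∞) → (V → ℝ³)` be a
continuous, minimally consistent input (`Σ_i δ_i(s) = 0`) converging to `δlimit`. If
`t : [0,∞) → (V → ℝ³)` satisfies the translation dynamics
`ṫ_i(s) = Σ_{j∼i} (t_j(s) − t_i(s)) − δ_i(s)`, then `t(s)` converges as `s → ∞` to an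
equilibrium `t_eq` with `Σ_{j∼i} (t_eq(j) − t_eq(i)) = δlimit(i)` for every `i`. -/
theorem coupled_translation_convergence {V : Type*} [Fintype V] [Nonempty V]
    (G : SimpleGraph V) [DecidableRel G.Adj] (hconn : G.Connected)
    (δ : ℝ → V → EuclideanSpace ℝ (Fin 3))
    (hδcont : ContinuousOn δ (Set.Ici 0))
    (hδmin : ∀ s, 0 ≤ s → ∑ i, δ s i = 0)
    (δlimit : V → EuclideanSpace ℝ (Fin 3))
    (hδlim : Tendsto δ atTop (nhds δlimit))
    (t : ℝ → V → EuclideanSpace ℝ (Fin 3))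
    (hdyn : ∀ i, ∀ s, 0 ≤ s → HasDerivAt (fun u => t u i)
      ((∑ j ∈ G.neighborFinset i, (t s j - t s i)) - δ s i) s) :
    ∃ teq : V → EuclideanSpace ℝ (Fin 3),
      Tendsto t atTop (nhds teq) ∧
      ∀ i, ∑ j ∈ G.neighborFinset i, (teq j - teq i) = δlimit i :=
  coupled_translation_convergence_general G hconn δ hδmin δlimit hδlim t hdyn
end
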